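/- Let D be a digraph and suppose there exist an arc s a' of D, a vertex d' not in {s, a'}, and three independent (a', {s, d'})-dipaths of which two end at d' and one ends at s. Then the union of these three dipaths and the arc s a' is a subdivision of E4, the digraph on vertices {a, b, c, d} with arc set {ab, ba, ac, cd, ad}, and this E4-subdivision has a-vertex a' and d-vertex d'. -/

import Mathlib

open List

variable {V : Type*}

/-- The interior (internal vertices) of a path given as a list of vertices. -/
def interiorL (l : List V) : List V := l.tail.dropLast

/-- `l` is a directed path (dipath) in the digraph `D`. -/
def IsDipath (D : V → V → Prop) (l : List V) : Prop :=
  l ≠ [] ∧ l.Chain' D ∧ l.Nodup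

/-- `l` is a dipath from `x` to `y` in `D`. -/
def DipathFromTo (D : V → V → Prop) (l : List V) (x y : V) : Prop :=
  IsDipath D l ∧ l.head? = some x ∧ l.getLast? = some y

/-- `l` is a directed cycle in `D` (length at least 2, digraphs being strict). -/
def IsDicycle (D : V → V → Prop) (l : List V) : Prop :=
  2 ≤ l.length ∧ l.Nodup ∧ l.Chain' D ∧ ∃ a ∈ l.getLast?, ∃ b ∈ l.head?, D a b

/-- The restriction (induced subdigraph) of `D` to the vertex set `A`. -/
def restrict (D : V → V → Prop) (A : Set V) : V → V → Prop :=
  fun u v => D u v ∧ u ∈ A ∧ v ∈ A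

/-- Reachability by a dipath inside the vertex set `A`. -/
def ReachIn (D : V → V → Prop) (A : Set V) : V → V → Prop :=
  Relation.ReflTransGen (restrict D A)

/-- Reachability by a dipath. -/
def Reach (D : V → V → Prop) : V → V → Prop := Relation.ReflTransGen D

/-- `x` appears strictly before `y` along the list `l`. -/
def Before (l : List V) (x y : V) : Prop :=
  ∃ i j : ℕ, i < j ∧ l[i]? = some x ∧ l[j]? = some y

/-- `x` and `y` are consecutive (in this order) in `l`. -/
def ConsecIn (l : List V) (x y : V) : Prop :=
  ∃ i : ℕ, l[i]? = some x ∧ l[i + 1]? = some y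

/-- `D` contains a subdivision of `F`, realized by the branch-vertex map `branch` and,
for every arc `uv` of `F`, the dipath `P u v` from `branch u` to `branch v`;
the paths have length at least one and are internally disjoint from each other
and from the branch vertices. -/
def IsSubdivisionIn {W : Type*} (F : W → W → Prop) (D : V → V → Prop)
    (branch : W → V) (P : W → W → List V) : Prop :=
  Function.Injective branch ∧
  (∀ u v : W, F u v →
    DipathFromTo D (P u v) (branch u) (branch v) ∧ 2 ≤ (P u v).length) ∧
  (∀ u v : W, F u v → ∀ x ∈ interiorL (P u v), ∀ w : W, x ≠ branch w) ∧
  (∀ u v u' v' : W, F u v → F u' v' → (u, v) ≠ (u', v') →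
    ∀ x ∈ interiorL (P u v), x ∉ interiorL (P u' v'))

/-- `D` contains a subdivision of `F`. -/
def ContainsSubdivision {W : Type*} (F : W → W → Prop) (D : V → V → Prop) : Prop :=
  ∃ (branch : W → V) (P : W → W → List V), IsSubdivisionIn F D branch P

/-- The digraph `E₄` on `a = 0`, `b = 1`, `c = 2`, `d = 3` with arcs
`ab`, `ba`, `ac`, `cd`, `ad`. -/
def E4 : Fin 4 → Fin 4 → Prop := fun u v =>
  (u, v) ∈ ([(0, 1), (1, 0), (0, 2), (2, 3), (0, 3)] : List (Fin 4 × Fin 4))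

lemma chain'_consecIn (l : List V) : l.Chain' (ConsecIn l) := by
  unfold List.Chain'
  rw [List.isChain_iff_getElem]
  intro i h
  exact ⟨i, List.getElem?_eq_getElem (by omega), List.getElem?_eq_getElem (by omega)⟩

lemma consecIn_cons {a : V} {l : List V} {x y : V} (h : ConsecIn l x y) :
    ConsecIn (a :: l) x y := by
  obtain ⟨i, h1, h2⟩ := h
  exact ⟨i + 1, by simpa using h1, by simpa using h2⟩

lemma consecIn_cons_split {a : V} {l : List V} {x y : V} (h : ConsecIn (a :: l) x y) :
    (x = a ∧ l.head? = some y) ∨ ConsecIn l x y := by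
  obtain ⟨i, h1, h2⟩ := h
  cases i with
  | zero =>
    left
    simp only [List.getElem?_cons_zero, Option.some.injEq] at h1
    refine ⟨h1.symm, ?_⟩
    rw [List.head?_eq_getElem?]
    simpa using h2
  | succ n => exact Or.inr ⟨n, by simpa using h1, by simpa using h2⟩

lemma mem_left_of_consecIn {l : List V} {x y : V} (h : ConsecIn l x y) : x ∈ l :=
  List.mem_of_getElem? h.choose_spec.1

lemma mem_right_of_consecIn {l : List V} {x y : V} (h : ConsecIn l x y) : y ∈ l :=
  List.mem_of_getElem? h.choose_spec.2

lemma mem_of_mem_interiorL {l : List V} {x : V} (h : x ∈ interiorL l) : x ∈ l :=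
  List.mem_of_mem_tail (List.dropLast_subset _ h)

lemma ne_last_of_mem_dropLast {l : List V} (hnd : l.Nodup) {b x : V}
    (hl : l.getLast? = some b) (h : x ∈ l.dropLast) : x ≠ b := by
  have hne : l ≠ [] := by rintro rfl; simp at hl
  have hb : l.getLast hne = b := by
    rw [List.getLast?_eq_getLast_of_ne_nil hne] at hl; exact (Option.some.injEq _ _).mp hl
  have := List.dropLast_append_getLast hne
  rw [hb] at this
  rw [← this] at hnd
  have := (List.nodup_append.mp hnd).2.2
  intro hxb
  exact this x h b (by simp) hxb

lemma interiorL_ne_head {l : List V} (hnd : l.Nodup) {a x : V}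
    (hh : l.head? = some a) (h : x ∈ interiorL l) : x ≠ a := by
  obtain ⟨t, rfl⟩ : ∃ t, l = a :: t := by cases l <;> simp_all
  have hx : x ∈ t := List.dropLast_subset _ h
  intro hxa; subst hxa
  exact (List.nodup_cons.mp hnd).1 hx

lemma interiorL_ne_last {l : List V} (hnd : l.Nodup) {b x : V}
    (hl : l.getLast? = some b) (h : x ∈ interiorL l) : x ≠ b := by
  cases l with
  | nil => simp [interiorL] at h
  | cons a t =>
    have ht : t ≠ [] := by
      rintro rfl; simp [interiorL] at h
    have hlt : t.getLast? = some b := by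
      rw [← hl]; cases t; exact absurd rfl ht; rfl
    exact ne_last_of_mem_dropLast (List.nodup_cons.mp hnd).2 hlt h

lemma two_le_length_of_ne {l : List V} {x y : V} (h1 : l.head? = some x)
    (h2 : l.getLast? = some y) (hxy : x ≠ y) : 2 ≤ l.length := by
  match l with
  | [] => simp at h1
  | [a] => simp_all
  | a :: b :: t => simp [List.length]

def P4 {V : Type*} (p01 p10 p02 p23 p03 : List V) : Fin 4 → Fin 4 → List V
  | 0, 1 => p01
  | 1, 0 => p10
  | 0, 2 => p02
  | 2, 3 => p23
  | 0, 3 => p03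
  | _, _ => []

def B4 {V : Type*} (a b c d : V) : Fin 4 → V
  | 0 => a
  | 1 => b
  | 2 => c
  | 3 => d

lemma B4_inj {a b c d : V} (h1 : a ≠ b) (h2 : a ≠ c) (h3 : a ≠ d)
    (h4 : b ≠ c) (h5 : b ≠ d) (h6 : c ≠ d) : Function.Injective (B4 a b c d) := by
  intro i j hij
  fin_cases i <;> fin_cases j <;> simp_all [B4]

lemma ne_B4 {a b c d x : V} (h1 : x ≠ a) (h2 : x ≠ b) (h3 : x ≠ c) (h4 : x ≠ d) :
    ∀ w : Fin 4, x ≠ B4 a b c d w := by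
  intro w
  fin_cases w <;> simpa [B4]
lemma E4_aux (D : V → V → Prop) (s a' d' : V)
    (hs : s ≠ a') (hds : d' ≠ s) (hda : d' ≠ a')
    (R1 R3 : List V) (c : V) (t2 : List V) (ht2 : t2 ≠ [])
    (hR1 : DipathFromTo D R1 a' d') (hR2 : DipathFromTo D (a' :: c :: t2) a' d')
    (hR3 : DipathFromTo D R3 a' s)
    (hind12 : ∀ z, z ∈ R1 → z ∈ a' :: c :: t2 → z = a' ∨ z = d')
    (hind13 : ∀ z, z ∈ R1 → z ∈ R3 → z = a')
    (hind23 : ∀ z, z ∈ a' :: c :: t2 → z ∈ R3 → z = a') :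
    ∃ branch P,
      IsSubdivisionIn E4
        (fun x y => ConsecIn R1 x y ∨ ConsecIn (a' :: c :: t2) x y ∨ ConsecIn R3 x y ∨
          (x = s ∧ y = a'))
        branch P ∧
      branch 0 = a' ∧ branch 3 = d' ∧
      ∀ x y : V,
        (ConsecIn R1 x y ∨ ConsecIn (a' :: c :: t2) x y ∨ ConsecIn R3 x y ∨
          (x = s ∧ y = a')) →
        ∃ w w' : Fin 4, E4 w w' ∧ ConsecIn (P w w') x y := by
  obtain ⟨⟨hR1ne, hR1ch, hR1nd⟩, hR1h, hR1l⟩ := hR1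
  obtain ⟨⟨hR2ne, hR2ch, hR2nd⟩, hR2h, hR2l⟩ := hR2
  obtain ⟨⟨hR3ne, hR3ch, hR3nd⟩, hR3h, hR3l⟩ := hR3
  -- basic membership facts
  have ha'R1 : a' ∈ R1 := List.mem_of_mem_head? (by rw [hR1h]; rfl)
  have hd'R1 : d' ∈ R1 := List.mem_of_mem_getLast? (by rw [hR1l]; rfl)
  have hsR3 : s ∈ R3 := List.mem_of_mem_getLast? (by rw [hR3l]; rfl)
  have hTl : (c :: t2).getLast? = some d' := by rw [← hR2l]; rfl
  have hTnd : (c :: t2).Nodup := (List.nodup_cons.mp hR2nd).2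
  have ha'T : a' ∉ c :: t2 := (List.nodup_cons.mp hR2nd).1
  -- distinctness of branch vertices
  have hca' : c ≠ a' := fun h => ha'T (h ▸ List.mem_cons_self (a := c) (l := t2))
  have hcd' : c ≠ d' := by
    have : c ∈ (c :: t2).dropLast := by
      cases t2 with
      | nil => exact absurd rfl ht2
      | cons b t => simp
    exact ne_last_of_mem_dropLast hTnd hTl this
  have hcs : c ≠ s := by
    intro h
    exact hca' (hind23 c (by simp) (h ▸ hsR3))
  have hsR1 : s ∉ R1 := fun h => hs (hind13 s h hsR3)
  have hd'R3 : d' ∉ R3 := fun h => hda (hind13 d' hd'R1 h)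
  have hsR2 : s ∉ a' :: c :: t2 := fun h => hs (hind23 s h hsR3)
  -- interior facts
  have hIntR1 : ∀ x ∈ interiorL R1, x ≠ a' ∧ x ≠ s ∧ x ≠ c ∧ x ≠ d' := by
    intro x hx
    have hxR1 : x ∈ R1 := mem_of_mem_interiorL hx
    refine ⟨interiorL_ne_head hR1nd hR1h hx, fun h => hsR1 (h ▸ hxR1), ?_,
      interiorL_ne_last hR1nd hR1l hx⟩
    intro h
    rcases hind12 x hxR1 (by rw [h]; simp) with h1 | h1
    · exact interiorL_ne_head hR1nd hR1h hx h1
    · exact interiorL_ne_last hR1nd hR1l hx h1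
  have hIntR3 : ∀ x ∈ interiorL R3, x ≠ a' ∧ x ≠ s ∧ x ≠ c ∧ x ≠ d' := by
    intro x hx
    have hxR3 : x ∈ R3 := mem_of_mem_interiorL hx
    refine ⟨interiorL_ne_head hR3nd hR3h hx, interiorL_ne_last hR3nd hR3l hx, ?_,
      fun h => hd'R3 (h ▸ hxR3)⟩
    intro h
    subst h
    exact hca' (hind23 x (by simp) hxR3)
  have hIntT : ∀ x ∈ interiorL (c :: t2), x ≠ a' ∧ x ≠ s ∧ x ≠ c ∧ x ≠ d' := by
    intro x hx
    have hxT : x ∈ c :: t2 := mem_of_mem_interiorL hx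
    have hxR2 : x ∈ a' :: c :: t2 := List.mem_cons_of_mem a' hxT
    refine ⟨fun h => ha'T (h ▸ hxT), fun h => hsR2 (h ▸ hxR2),
      interiorL_ne_head hTnd rfl hx, interiorL_ne_last hTnd hTl hx⟩
  -- pairwise interior disjointness
  have hD13 : ∀ x ∈ interiorL R1, x ∉ interiorL R3 := fun x hx hx' =>
    (hIntR1 x hx).1 (hind13 x (mem_of_mem_interiorL hx) (mem_of_mem_interiorL hx'))
  have hD1T : ∀ x ∈ interiorL R1, x ∉ interiorL (c :: t2) := by
    intro x hx hx'
    rcases hind12 x (mem_of_mem_interiorL hx)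
        (List.mem_cons_of_mem a' (mem_of_mem_interiorL hx')) with h | h
    · exact (hIntR1 x hx).1 h
    · exact (hIntR1 x hx).2.2.2 h
  have hD3T : ∀ x ∈ interiorL R3, x ∉ interiorL (c :: t2) := fun x hx hx' =>
    (hIntR3 x hx).1 (hind23 x (List.mem_cons_of_mem a' (mem_of_mem_interiorL hx'))
      (mem_of_mem_interiorL hx))
  have hTlen : 2 ≤ (c :: t2).length := by
    cases t2 with
    | nil => exact absurd rfl ht2
    | cons b t => simp
  -- dipaths in the union digraph
  refine ⟨B4 a' s c d', P4 R3 [s, a'] [a', c] (c :: t2) R1, ⟨?_, ?_, ?_, ?_⟩, rfl, rfl, ?_⟩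
  · -- injectivity
    exact B4_inj (Ne.symm hs) (Ne.symm hca') (Ne.symm hda) (Ne.symm hcs) (Ne.symm hds) hcd'
  · -- each arc is realized by a dipath
    intro u v huv
    have hac : ConsecIn (a' :: c :: t2) a' c := ⟨0, rfl, rfl⟩
    simp only [E4, List.mem_cons, List.mem_singleton, List.mem_nil_iff, or_false, Prod.mk.injEq] at huv
    rcases huv with ⟨rfl, rfl⟩ | ⟨rfl, rfl⟩ | ⟨rfl, rfl⟩ | ⟨rfl, rfl⟩ | ⟨rfl, rfl⟩
    · exact ⟨⟨⟨hR3ne, (chain'_consecIn R3).imp fun _ _ h => Or.inr (Or.inr (Or.inl h)), hR3nd⟩,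
        hR3h, hR3l⟩, two_le_length_of_ne hR3h hR3l (Ne.symm hs)⟩
    · exact ⟨⟨⟨List.cons_ne_nil s [a'], List.isChain_pair.mpr (Or.inr (Or.inr (Or.inr ⟨rfl, rfl⟩))),
        List.nodup_cons.mpr ⟨fun h => hs (List.mem_singleton.mp h), List.nodup_singleton a'⟩⟩,
        rfl, rfl⟩, Nat.le_refl 2⟩
    · exact ⟨⟨⟨List.cons_ne_nil a' [c], List.isChain_pair.mpr (Or.inr (Or.inl hac)),
        List.nodup_cons.mpr ⟨fun h => hca' (List.mem_singleton.mp h).symm,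
          List.nodup_singleton c⟩⟩, rfl, rfl⟩, Nat.le_refl 2⟩
    · exact ⟨⟨⟨List.cons_ne_nil c t2,
        ((chain'_consecIn (a' :: c :: t2)).tail).imp fun _ _ h => Or.inr (Or.inl h), hTnd⟩,
        rfl, hTl⟩, hTlen⟩
    · exact ⟨⟨⟨hR1ne, (chain'_consecIn R1).imp fun _ _ h => Or.inl h, hR1nd⟩,
        hR1h, hR1l⟩, two_le_length_of_ne hR1h hR1l (Ne.symm hda)⟩
  · -- interiors avoid branch vertices
    intro u v huv
    simp only [E4, List.mem_cons, List.mem_singleton, List.mem_nil_iff, or_false, Prod.mk.injEq] at huv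
    rcases huv with ⟨rfl, rfl⟩ | ⟨rfl, rfl⟩ | ⟨rfl, rfl⟩ | ⟨rfl, rfl⟩ | ⟨rfl, rfl⟩
    · intro x hx w
      obtain ⟨h1, h2, h3, h4⟩ := hIntR3 x hx
      exact ne_B4 h1 h2 h3 h4 w
    · exact fun x hx => absurd hx (List.not_mem_nil (a := x))
    · exact fun x hx => absurd hx (List.not_mem_nil (a := x))
    · intro x hx w
      obtain ⟨h1, h2, h3, h4⟩ := hIntT x hx
      exact ne_B4 h1 h2 h3 h4 w
    · intro x hx w
      obtain ⟨h1, h2, h3, h4⟩ := hIntR1 x hx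
      exact ne_B4 h1 h2 h3 h4 w
  · -- pairwise internal disjointness
    intro u v u' v' huv huv' hne
    simp only [E4, List.mem_cons, List.mem_singleton, List.mem_nil_iff, or_false, Prod.mk.injEq] at huv huv'
    rcases huv with ⟨rfl, rfl⟩ | ⟨rfl, rfl⟩ | ⟨rfl, rfl⟩ | ⟨rfl, rfl⟩ | ⟨rfl, rfl⟩ <;>
      rcases huv' with ⟨rfl, rfl⟩ | ⟨rfl, rfl⟩ | ⟨rfl, rfl⟩ | ⟨rfl, rfl⟩ | ⟨rfl, rfl⟩
    -- row (0,1): P = R3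
    · exact absurd rfl hne
    · exact fun x hx hx' => absurd hx' (List.not_mem_nil (a := x))
    · exact fun x hx hx' => absurd hx' (List.not_mem_nil (a := x))
    · exact fun x hx => hD3T x hx
    · exact fun x hx hx' => hD13 x hx' hx
    -- row (1,0): P = [s, a']
    · exact fun x hx => absurd hx (List.not_mem_nil (a := x))
    · exact absurd rfl hne
    · exact fun x hx => absurd hx (List.not_mem_nil (a := x))
    · exact fun x hx => absurd hx (List.not_mem_nil (a := x))
    · exact fun x hx => absurd hx (List.not_mem_nil (a := x))
    -- row (0,2): P = [a', c]
    · exact fun x hx => absurd hx (List.not_mem_nil (a := x))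
    · exact fun x hx => absurd hx (List.not_mem_nil (a := x))
    · exact absurd rfl hne
    · exact fun x hx => absurd hx (List.not_mem_nil (a := x))
    · exact fun x hx => absurd hx (List.not_mem_nil (a := x))
    -- row (2,3): P = c :: t2
    · exact fun x hx hx' => hD3T x hx' hx
    · exact fun x hx hx' => absurd hx' (List.not_mem_nil (a := x))
    · exact fun x hx hx' => absurd hx' (List.not_mem_nil (a := x))
    · exact absurd rfl hne
    · exact fun x hx hx' => hD1T x hx' hx
    -- row (0,3): P = R1
    · exact fun x hx => hD13 x hx
    · exact fun x hx hx' => absurd hx' (List.not_mem_nil (a := x))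
    · exact fun x hx hx' => absurd hx' (List.not_mem_nil (a := x))
    · exact fun x hx => hD1T x hx
    · exact absurd rfl hne
  · -- coverage
    intro x y hxy
    rcases hxy with h | h | h | ⟨rfl, rfl⟩
    · exact ⟨0, 3, by simp [E4], h⟩
    · rcases consecIn_cons_split h with ⟨rfl, hy⟩ | h'
      · have hyc : y = c := by simpa [eq_comm] using hy
        subst hyc
        exact ⟨0, 2, by simp [E4], 0, rfl, rfl⟩
      · exact ⟨2, 3, by simp [E4], h'⟩
    · exact ⟨0, 1, by simp [E4], h⟩
    · exact ⟨1, 0, by simp [E4], 0, rfl, rfl⟩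

/-- the union of the three independent `(a',{s,d'})`-dipaths (two ending
at `d'`, one at `s`) together with the arc `s a'` is an `E₄`-subdivision with
`a`-vertex `a'` and `d`-vertex `d'`. -/
theorem E4_of_paths (D : V → V → Prop) (s a' d' : V)
    (hsa : D s a') (hs : s ≠ a') (hds : d' ≠ s) (hda : d' ≠ a')
    (R1 R2 R3 : List V)
    (hR1 : DipathFromTo D R1 a' d') (hR2 : DipathFromTo D R2 a' d')
    (hR12ne : R1 ≠ R2)
    (hR3 : DipathFromTo D R3 a' s)
    (hind12 : ∀ z, z ∈ R1 → z ∈ R2 → z = a' ∨ z = d')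
    (hind13 : ∀ z, z ∈ R1 → z ∈ R3 → z = a')
    (hind23 : ∀ z, z ∈ R2 → z ∈ R3 → z = a') :
    ∃ branch P,
      IsSubdivisionIn E4
        (fun x y => ConsecIn R1 x y ∨ ConsecIn R2 x y ∨ ConsecIn R3 x y ∨
          (x = s ∧ y = a'))
        branch P ∧
      branch 0 = a' ∧ branch 3 = d' ∧
      ∀ x y : V,
        (ConsecIn R1 x y ∨ ConsecIn R2 x y ∨ ConsecIn R3 x y ∨ (x = s ∧ y = a')) →
        ∃ w w' : Fin 4, E4 w w' ∧ ConsecIn (P w w') x y := by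
  by_cases h2 : 3 ≤ R2.length
  · -- R2 has an internal vertex
    rcases hR : R2 with _ | ⟨x, _ | ⟨c, t2⟩⟩
    · subst hR; simp at h2
    · subst hR; simp at h2
    · subst hR
      obtain rfl : a' = x := by symm; simpa using hR2.2.1
      have ht2 : t2 ≠ [] := by rintro rfl; simp at h2
      exact E4_aux D s a' d' hs hds hda R1 R3 c t2 ht2 hR1 hR2 hR3 hind12 hind13 hind23
  · -- R2 = [a', d'], so R1 has an internal vertex
    have hR2eq : R2 = [a', d'] := by
      have hlen : 2 ≤ R2.length := two_le_length_of_ne hR2.2.1 hR2.2.2 (Ne.symm hda)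
      rcases R2 with _ | ⟨x, _ | ⟨y, _ | ⟨z, t⟩⟩⟩
      · simp at hlen
      · simp at hlen
      · have hx : x = a' := by simpa using hR2.2.1
        have hy : y = d' := by simpa using hR2.2.2
        rw [hx, hy]
      · exfalso; apply h2; simp
    subst hR2eq
    have h1len : 3 ≤ R1.length := by
      by_contra h1
      have hlen : 2 ≤ R1.length := two_le_length_of_ne hR1.2.1 hR1.2.2 (Ne.symm hda)
      rcases R1 with _ | ⟨x, _ | ⟨y, _ | ⟨z, t⟩⟩⟩
      · simp at hlen
      · simp at hlen
      · have hx : x = a' := by simpa using hR1.2.1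
        have hy : y = d' := by simpa using hR1.2.2
        rw [hx, hy] at hR12ne
        exact hR12ne rfl
      · apply h1; simp
    rcases hR : R1 with _ | ⟨x, _ | ⟨c, t1⟩⟩
    · subst hR; simp at h1len
    · subst hR; simp at h1len
    · subst hR
      obtain rfl : a' = x := by symm; simpa using hR1.2.1
      have ht1 : t1 ≠ [] := by rintro rfl; simp at h1len
      have hd'R1 : d' ∈ a' :: c :: t1 := List.mem_of_mem_getLast? (by rw [hR1.2.2]; rfl)
      obtain ⟨branch, P, hsub, hb0, hb3, hcov⟩ :=
        E4_aux D s a' d' hs hds hda [a', d'] R3 c t1 ht1 hR2 hR1 hR3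
          (fun z h1 h2 => hind12 z h2 h1)
          (fun z h1 h3 => by
            rcases List.mem_cons.mp h1 with rfl | h1
            · rfl
            · have : z = d' := by simpa using h1
              subst this
              exact absurd (hind13 z hd'R1 h3) hda)
          hind13
      have hEq : (fun x y => ConsecIn [a', d'] x y ∨ ConsecIn (a' :: c :: t1) x y ∨
          ConsecIn R3 x y ∨ (x = s ∧ y = a')) =
          (fun x y => ConsecIn (a' :: c :: t1) x y ∨ ConsecIn [a', d'] x y ∨
          ConsecIn R3 x y ∨ (x = s ∧ y = a')) := by
        funext x y
        exact propext (by tauto)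
      rw [hEq] at hsub
      exact ⟨branch, P, hsub, hb0, hb3, fun x y hxy => hcov x y (by
        rcases hxy with h | h | h | h
        exacts [Or.inr (Or.inl h), Or.inl h, Or.inr (Or.inr (Or.inl h)),
          Or.inr (Or.inr (Or.inr h))])⟩
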